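/- If a term t is stuck in λS, then for any evaluation context F, the term F[t] is a normal form exactly when F is a pure context (contains no reset surrounding the hole); in particular, if F = F'[⟨E⟩] then F[t] is not a normal form. -/

import Mathlib

/-- Terms of the calculus λS: variables, abstractions, applications,
    shift (Sk.t) and reset (⟨t⟩). -/
inductive Tm : Type
  | var : ℕ → Tm
  | lam : ℕ → Tm → Tm
  | app : Tm → Tm → Tm
  | shift : ℕ → Tm → Tm
  | reset : Tm → Tm
deriving DecidableEq

namespace Tm

/-- Values are λ-abstractions. -/
def IsValue : Tm → Prop
  | lam _ _ => True
  | _ => False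

/-- Free variables. -/
def fv : Tm → Finset ℕ
  | var x => {x}
  | lam x t => fv t \ {x}
  | app a b => fv a ∪ fv b
  | shift k t => fv t \ {k}
  | reset t => fv t

def Closed (t : Tm) : Prop := fv t = ∅

/-- Substitution t{v/x} (substituted terms are closed values, so no
    capture can occur). -/
def subst : Tm → ℕ → Tm → Tm
  | var y, x, v => if y = x then v else var y
  | lam y t, x, v => if y = x then lam y t else lam y (subst t x v)
  | app a b, x, v => app (subst a x v) (subst b x v)
  | shift k t, x, v => if k = x then shift k t else shift k (subst t x v)
  | reset t, x, v => reset (subst t x v)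

end Tm

/-- (Evaluation) contexts F ::= [] | v F | F t | ⟨F⟩, represented outside-in.
    Pure contexts E are those with no reset constructor. -/
inductive Ctx : Type
  | hole : Ctx
  | appR : Tm → Ctx → Ctx   -- v F
  | appL : Ctx → Tm → Ctx   -- F t
  | reset : Ctx → Ctx       -- ⟨F⟩
deriving DecidableEq

namespace Ctx

def plug : Ctx → Tm → Tm
  | hole, t => t
  | appR v F, t => Tm.app v (F.plug t)
  | appL F u, t => Tm.app (F.plug t) u
  | reset F, t => Tm.reset (F.plug t)

/-- Well-formedness: in `v F` the term v must be a value. -/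
def Wf : Ctx → Prop
  | hole => True
  | appR v F => v.IsValue ∧ F.Wf
  | appL F _ => F.Wf
  | reset F => F.Wf

/-- Pure contexts contain no reset around the hole. -/
def Pure : Ctx → Prop
  | hole => True
  | appR _ F => F.Pure
  | appL F _ => F.Pure
  | reset _ => False

def fv : Ctx → Finset ℕ
  | hole => ∅
  | appR v F => v.fv ∪ F.fv
  | appL F u => F.fv ∪ u.fv
  | reset F => F.fv

/-- Context composition: (F.comp G)[t] = F[G[t]]. -/
def comp : Ctx → Ctx → Ctx
  | hole, G => G
  | appR v F, G => appR v (F.comp G)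
  | appL F u, G => appL (F.comp G) u
  | reset F, G => reset (F.comp G)

end Ctx

/-- A canonical fresh variable not occurring in the finite set s. -/
def fresh (s : Finset ℕ) : ℕ := s.sup id + 1

/-- The reduction relation →v of λS. -/
inductive Red : Tm → Tm → Prop
  | beta (F : Ctx) (x : ℕ) (t v : Tm) :
      F.Wf → v.IsValue →
      Red (F.plug (Tm.app (Tm.lam x t) v)) (F.plug (t.subst x v))
  | shift (F E : Ctx) (k : ℕ) (t : Tm) :
      F.Wf → E.Wf → E.Pure →
      Red (F.plug (Tm.reset (E.plug (Tm.shift k t))))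
          (F.plug (Tm.reset (t.subst k
            (Tm.lam (fresh E.fv) (Tm.reset (E.plug (Tm.var (fresh E.fv))))))))
  | reset (F : Ctx) (v : Tm) :
      F.Wf → v.IsValue →
      Red (F.plug (Tm.reset v)) (F.plug v)

/-- A term is stuck if it is not a value and admits no reduction step. -/
def Stuck (t : Tm) : Prop := ¬ t.IsValue ∧ ∀ t', ¬ Red t t'

/-- A normal form is a value or a stuck term. -/
def NormalForm (t : Tm) : Prop := t.IsValue ∨ Stuck t

/-- Reflexive-transitive closure of reduction. -/
def Steps : Tm → Tm → Prop := Relation.ReflTransGen Red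

/-- Evaluation: t ⇓ t' when t →v* t' and t' is irreducible. -/
def Evals (t t' : Tm) : Prop := Steps t t' ∧ ∀ u, ¬ Red t' u

/-- Redexes: (λx.t) v, ⟨E[Sk.t]⟩ with E pure, and ⟨v⟩. -/
def IsRedex (r : Tm) : Prop :=
  (∃ x t v, Tm.IsValue v ∧ r = Tm.app (Tm.lam x t) v) ∨
  (∃ E : Ctx, ∃ k t, E.Wf ∧ E.Pure ∧ r = Tm.reset (E.plug (Tm.shift k t))) ∨
  (∃ v, Tm.IsValue v ∧ r = Tm.reset v)

/-- Divergence: an infinite reduction sequence. -/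
def Diverges (t : Tm) : Prop := ∃ f : ℕ → Tm, f 0 = t ∧ ∀ n, Red (f n) (f (n + 1))

/-- Ω = (λx.x x)(λx.x x). -/
def Omega : Tm :=
  Tm.app (Tm.lam 0 (Tm.app (Tm.var 0) (Tm.var 0)))
         (Tm.lam 0 (Tm.app (Tm.var 0) (Tm.var 0)))

/-- Arbitrary one-hole contexts C. -/
inductive GCtx : Type
  | hole : GCtx
  | lam : ℕ → GCtx → GCtx
  | appL : GCtx → Tm → GCtx
  | appR : Tm → GCtx → GCtx
  | shift : ℕ → GCtx → GCtx
  | reset : GCtx → GCtx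

def GCtx.plug : GCtx → Tm → Tm
  | hole, t => t
  | lam x C, t => Tm.lam x (C.plug t)
  | appL C u, t => Tm.app (C.plug t) u
  | appR u C, t => Tm.app u (C.plug t)
  | shift k C, t => Tm.shift k (C.plug t)
  | reset C, t => Tm.reset (C.plug t)

/-- Contextual equivalence for the relaxed semantics. -/
def CtxEquiv (t0 t1 : Tm) : Prop :=
  ∀ C : GCtx, (C.plug t0).Closed → (C.plug t1).Closed →
    ((∃ v, v.IsValue ∧ Evals (C.plug t0) v) ↔ (∃ v, v.IsValue ∧ Evals (C.plug t1) v)) ∧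
    ((∃ s, Stuck s ∧ Evals (C.plug t0) s) ↔ (∃ s, Stuck s ∧ Evals (C.plug t1) s))

/-- Contextual equivalence for the original (top-level reset) semantics. -/
def CtxEquivP (t0 t1 : Tm) : Prop :=
  ∀ C : GCtx, (Tm.reset (C.plug t0)).Closed → (Tm.reset (C.plug t1)).Closed →
    ((∃ v, v.IsValue ∧ Evals (Tm.reset (C.plug t0)) v) ↔
     (∃ v, v.IsValue ∧ Evals (Tm.reset (C.plug t1)) v))

/-- The term-generating closure of a relation R on closed terms. -/
inductive TmClo (R : Tm → Tm → Prop) : Tm → Tm → Prop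
  | base {t t'} : R t t' → TmClo R t t'
  | var (x : ℕ) : TmClo R (Tm.var x) (Tm.var x)
  | lam {t t'} (x : ℕ) : TmClo R t t' → TmClo R (Tm.lam x t) (Tm.lam x t')
  | app {a a' b b'} : TmClo R a a' → TmClo R b b' →
      TmClo R (Tm.app a b) (Tm.app a' b')
  | shift {t t'} (k : ℕ) : TmClo R t t' → TmClo R (Tm.shift k t) (Tm.shift k t')
  | reset {t t'} : TmClo R t t' → TmClo R (Tm.reset t) (Tm.reset t')

/-!
A closed stuck term is neither a variable, a value nor a reset (⟨v⟩ and ⟨E[Sk.t]⟩ both reduce),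
so following its evaluation positions exhibits it as E₀[Sk.t₀] with E₀ pure. Under a pure
context this shift is never inside a redex: redexes are applications or resets, and every
application on the path to the shift has a non-value on that side. An impure context has an
innermost reset around the hole; it delimits a pure context, so the capture rule fires.
-/

namespace Ctx

@[simp]
lemma plug_comp (F G : Ctx) (u : Tm) : (F.comp G).plug u = F.plug (G.plug u) := by
  induction F <;> simp [comp, plug, *]

lemma Wf.comp {F G : Ctx} (hF : F.Wf) (hG : G.Wf) : (F.comp G).Wf := by
  induction F <;> simp_all [Ctx.comp, Wf]

lemma Pure.comp {F G : Ctx} (hF : F.Pure) (hG : G.Pure) : (F.comp G).Pure := by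
  induction F <;> simp_all [Ctx.comp, Pure]

lemma isValue_of_isValue_plug {F : Ctx} {u : Tm} (h : (F.plug u).IsValue) : u.IsValue := by
  cases F <;> simp_all [plug, Tm.IsValue]

lemma exists_eq_comp_reset_of_not_pure {F : Ctx} (hF : F.Wf) (hp : ¬ F.Pure) :
    ∃ F' E : Ctx, F'.Wf ∧ E.Wf ∧ E.Pure ∧ F = F'.comp (reset E) := by
  induction F with
  | hole => exact absurd trivial hp
  | appR v F ih =>
    obtain ⟨F', E, hF', hE, hEp, rfl⟩ := ih hF.2 hp
    exact ⟨appR v F', E, ⟨hF.1, hF'⟩, hE, hEp, rfl⟩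
  | appL F u ih =>
    obtain ⟨F', E, hF', hE, hEp, rfl⟩ := ih hF hp
    exact ⟨appL F' u, E, hF', hE, hEp, rfl⟩
  | reset F ih =>
    by_cases hFp : F.Pure
    · exact ⟨hole, F, trivial, hF, hFp, rfl⟩
    · obtain ⟨F', E, hF', hE, hEp, rfl⟩ := ih hF hFp
      exact ⟨reset F', E, hF', hE, hEp, rfl⟩

end Ctx

namespace Red

lemma plug {s s' : Tm} (h : Red s s') {G : Ctx} (hG : G.Wf) : Red (G.plug s) (G.plug s') := by
  cases h with
  | beta F x t v hF hv =>
    simpa using Red.beta (G.comp F) x t v (hG.comp hF) hv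
  | shift F E k t hF hE hEp =>
    simpa using Red.shift (G.comp F) E k t (hG.comp hF) hE hEp
  | reset F v hF hv =>
    simpa using Red.reset (G.comp F) v (hG.comp hF) hv

lemma exists_app_or_reset {s s' : Tm} (h : Red s s') :
    (∃ a b, s = Tm.app a b) ∨ ∃ a, s = Tm.reset a := by
  cases h with
  | beta F => cases F <;> simp [Ctx.plug]
  | shift F => cases F <;> simp [Ctx.plug]
  | reset F => cases F <;> simp [Ctx.plug]

lemma not_isValue {s s' : Tm} (h : Red s s') : ¬ s.IsValue := by
  rcases h.exists_app_or_reset with ⟨a, b, rfl⟩ | ⟨a, rfl⟩ <;> simp [Tm.IsValue]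

lemma not_normalForm {s s' : Tm} (h : Red s s') : ¬ NormalForm s := by
  rintro (hv | hs)
  exacts [h.not_isValue hv, hs.2 s' h]

lemma not_shift {k : ℕ} {t u : Tm} : ¬ Red (Tm.shift k t) u := fun h => by
  rcases h.exists_app_or_reset with ⟨a, b, h⟩ | ⟨a, h⟩ <;> cases h

lemma app_inv {a b u : Tm} (h : Red (Tm.app a b) u) :
    (a.IsValue ∧ b.IsValue) ∨ (∃ a', Red a a') ∨ (a.IsValue ∧ ∃ b', Red b b') := by
  generalize hab : Tm.app a b = s at h
  cases h with
  | beta F x t v hF hv =>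
    cases F <;> simp only [Ctx.plug, Tm.app.injEq, reduceCtorEq] at hab
    case hole => exact .inl ⟨hab.1 ▸ trivial, hab.2 ▸ hv⟩
    case appR w F =>
      exact .inr (.inr ⟨hab.1 ▸ hF.1, _, hab.2 ▸ Red.beta F x t v hF.2 hv⟩)
    case appL F w => exact .inr (.inl ⟨_, hab.1 ▸ Red.beta F x t v hF hv⟩)
  | shift F E k t hF hE hEp =>
    cases F <;> simp only [Ctx.plug, Tm.app.injEq, reduceCtorEq] at hab
    case appR w F =>
      exact .inr (.inr ⟨hab.1 ▸ hF.1, _, hab.2 ▸ Red.shift F E k t hF.2 hE hEp⟩)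
    case appL F w => exact .inr (.inl ⟨_, hab.1 ▸ Red.shift F E k t hF hE hEp⟩)
  | reset F v hF hv =>
    cases F <;> simp only [Ctx.plug, Tm.app.injEq, reduceCtorEq] at hab
    case appR w F =>
      exact .inr (.inr ⟨hab.1 ▸ hF.1, _, hab.2 ▸ Red.reset F v hF.2 hv⟩)
    case appL F w => exact .inr (.inl ⟨_, hab.1 ▸ Red.reset F v hF hv⟩)

end Red

lemma not_red_pure_plug_shift {E : Ctx} (hE : E.Wf) (hEp : E.Pure) (k : ℕ) (t u : Tm) :
    ¬ Red (E.plug (Tm.shift k t)) u := by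
  induction E generalizing u with
  | hole => exact Red.not_shift
  | appR v E ih =>
    intro h
    rcases h.app_inv with ⟨-, hv⟩ | ⟨_, hv⟩ | ⟨-, _, h⟩
    · exact False.elim (Ctx.isValue_of_isValue_plug hv)
    · exact hv.not_isValue hE.1
    · exact ih hE.2 hEp _ h
  | appL E w ih =>
    intro h
    rcases h.app_inv with ⟨hv, -⟩ | ⟨_, h⟩ | ⟨hv, -⟩
    · exact False.elim (Ctx.isValue_of_isValue_plug hv)
    · exact ih hE hEp _ h
    · exact False.elim (Ctx.isValue_of_isValue_plug hv)
  | reset => exact absurd hEp id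

lemma Stuck.of_plug {G : Ctx} {s : Tm} (hs : Stuck (G.plug s)) (hG : G.Wf) (hv : ¬ s.IsValue) :
    Stuck s :=
  ⟨hv, fun _ h => hs.2 _ (h.plug hG)⟩

lemma Stuck.exists_eq_pure_plug_shift {t : Tm} (hc : t.Closed) (hs : Stuck t) :
    ∃ (E : Ctx) (k : ℕ) (t₀ : Tm), E.Wf ∧ E.Pure ∧ t = E.plug (Tm.shift k t₀) := by
  induction t with
  | var x => simp [Tm.Closed, Tm.fv] at hc
  | lam => exact absurd trivial hs.1
  | app a b iha ihb =>
    simp only [Tm.Closed, Tm.fv, Finset.union_eq_empty] at hc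
    by_cases ha : a.IsValue
    · by_cases hb : b.IsValue
      · cases a <;> simp only [Tm.IsValue] at ha
        exact absurd (Red.beta .hole _ _ b trivial hb) (hs.2 _)
      · obtain ⟨E, k, t₀, hE, hEp, rfl⟩ :=
          ihb hc.2 (hs.of_plug (G := .appR a .hole) ⟨ha, trivial⟩ hb)
        exact ⟨.appR a E, k, t₀, ⟨ha, hE⟩, hEp, rfl⟩
    · obtain ⟨E, k, t₀, hE, hEp, rfl⟩ := iha hc.1 (hs.of_plug (G := .appL .hole b) trivial ha)
      exact ⟨.appL E b, k, t₀, hE, hEp, rfl⟩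
  | shift k t₀ => exact ⟨.hole, k, t₀, trivial, trivial, rfl⟩
  | reset s ih =>
    by_cases hv : s.IsValue
    · exact absurd (Red.reset .hole s trivial hv) (hs.2 _)
    · obtain ⟨E, k, t₀, hE, hEp, rfl⟩ := ih hc (hs.of_plug (G := .reset .hole) trivial hv)
      exact absurd (Red.shift .hole E k t₀ trivial hE hEp) (hs.2 _)

/-- for a stuck (closed) term t, F[t] is a normal form exactly
    when F is pure; in particular F'[⟨E[t]⟩] is never a normal form. -/
theorem stuck_plug_normal_iff_pure (t : Tm) (ht : t.Closed) (hs : Stuck t) :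
    (∀ F : Ctx, F.Wf → (NormalForm (F.plug t) ↔ F.Pure)) ∧
    (∀ (F' E : Ctx), F'.Wf → E.Wf → E.Pure →
      ¬ NormalForm ((F'.comp (Ctx.reset E)).plug t)) := by
  obtain ⟨E₀, k, t₀, hE₀, hE₀p, rfl⟩ := hs.exists_eq_pure_plug_shift ht
  have not_normalForm_reset : ∀ (F' E : Ctx), F'.Wf → E.Wf → E.Pure →
      ¬ NormalForm ((F'.comp (Ctx.reset E)).plug (E₀.plug (Tm.shift k t₀))) :=
    fun F' E hF' hE hEp => by
      simpa [Ctx.plug] using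
        (Red.shift F' (E.comp E₀) k t₀ hF' (hE.comp hE₀) (hEp.comp hE₀p)).not_normalForm
  refine ⟨fun F hF => ⟨fun hnf => ?_, fun hp => ?_⟩, not_normalForm_reset⟩
  · by_contra hp
    obtain ⟨F', E, hF', hE, hEp, rfl⟩ := Ctx.exists_eq_comp_reset_of_not_pure hF hp
    exact not_normalForm_reset F' E hF' hE hEp hnf
  · refine .inr ⟨fun hv => hs.1 (Ctx.isValue_of_isValue_plug hv), fun u => ?_⟩
    rw [← Ctx.plug_comp]
    exact not_red_pure_plug_shift (hF.comp hE₀) (hp.comp hE₀p) k t₀ u
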